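/- arXiv:2207.03193 — 2 statements merged into one kernel-verified Lean document; each statement's English description precedes it below -/
import Mathlib

section
/- Let M and N be A-invariant subgroups of G with N normal in M. If z^A ∩ M ⊆ N, then the quotient M/N is an Eppo-group. In particular, G/N is an Eppo-group whenever N is an A-invariant normal subgroup of G meeting z^A nontrivially, and any A-invariant subgroup N of G with z^A ∩ N = ∅ is an Eppo-group. -/
open MulAction

namespace Paper

variable (A G : Type*) [Group A] [Group G] [MulDistribMulAction A G]

/-- The vertex set of the commuting graph of `A`-orbits: the `A`-orbits of
nonidentity elements of `G`, realized as nontrivial classes in the orbit quotient. -/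
def Vertex :=
  {o : Quotient (MulAction.orbitRel A G) // o ≠ Quotient.mk (MulAction.orbitRel A G) (1 : G)}

/-- The commuting graph `Γ(G,A)` of `A`-orbits: two distinct orbits are adjacent
iff they contain commuting representatives. -/
def commGraph : SimpleGraph (Vertex A G) where
  Adj u v := u ≠ v ∧ ∃ x y : G,
      Quotient.mk (MulAction.orbitRel A G) x = u.1 ∧
      Quotient.mk (MulAction.orbitRel A G) y = v.1 ∧ Commute x y
  symm := by
    constructor
    rintro u v ⟨h, x, y, hx, hy, hc⟩
    exact ⟨h.symm, y, x, hy, hx, hc.symm⟩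
  loopless := ⟨fun u h => h.1 rfl⟩

/-- The vertex `x^A` determined by a nonidentity element `x` of `G`. -/
def vert (x : G) (hx : x ≠ 1) : Vertex A G :=
  ⟨Quotient.mk (MulAction.orbitRel A G) x, fun h => hx (by
    obtain ⟨a, ha⟩ := MulAction.mem_orbit_iff.mp (Quotient.exact h)
    exact ha.symm.trans (smul_one a))⟩

/-- An `F`-graph: a connected graph with at most one vertex of degree at least three. -/
def IsFGraph {V : Type*} (Γ : SimpleGraph V) : Prop :=
  Γ.Connected ∧ ∀ u v : V, 3 ≤ (Γ.neighborSet u).ncard → 3 ≤ (Γ.neighborSet v).ncard → u = v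

/-- A subgroup of `G` is `A`-invariant if it is stable under the action of `A`. -/
def AInv (H : Subgroup G) : Prop := ∀ (a : A), ∀ x ∈ H, a • x ∈ H

/-- An Eppo-group: every nontrivial element has prime power order. -/
def IsEppo (H : Type*) [Group H] : Prop := ∀ x : H, x ≠ 1 → IsPrimePow (orderOf x)

/-- The `p`-core `O_p(G)`: the join of all normal `p`-subgroups of `G`
(i.e. the largest normal `p`-subgroup of a finite group `G`). -/
def pCore (p : ℕ) (G : Type*) [Group G] : Subgroup G :=
  ⨆ N : {N : Subgroup G // N.Normal ∧ IsPGroup p N}, (N : Subgroup G)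

instance pCore_normal (p : ℕ) (G : Type*) [Group G] : (pCore p G).Normal := by
  constructor
  intro x hx g
  refine Subgroup.iSup_induction (C := fun y => g * y * g⁻¹ ∈ pCore p G) _ hx ?_ ?_ ?_
  · rintro ⟨N, hN, hNp⟩ y hy
    exact Subgroup.mem_iSup_of_mem ⟨N, hN, hNp⟩ (hN.conj_mem y hy g)
  · simpa using (pCore p G).one_mem
  · intro a b ha hb
    have h : g * (a * b) * g⁻¹ = (g * a * g⁻¹) * (g * b * g⁻¹) := by group
    rw [h]; exact (pCore p G).mul_mem ha hb

/-- The Fitting subgroup `F(G)`: the join of all normal nilpotent subgroups of `G`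
(i.e. the largest normal nilpotent subgroup of a finite group `G`). -/
def fitting (G : Type*) [Group G] : Subgroup G :=
  ⨆ N : {N : Subgroup G // N.Normal ∧ Group.IsNilpotent N}, (N : Subgroup G)

instance fitting_normal (G : Type*) [Group G] : (fitting G).Normal := by
  constructor
  intro x hx g
  refine Subgroup.iSup_induction (C := fun y => g * y * g⁻¹ ∈ fitting G) _ hx ?_ ?_ ?_
  · rintro ⟨N, hN, hNn⟩ y hy
    exact Subgroup.mem_iSup_of_mem ⟨N, hN, hNn⟩ (hN.conj_mem y hy g)
  · simpa using (fitting G).one_mem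
  · intro a b ha hb
    have h : g * (a * b) * g⁻¹ = (g * a * g⁻¹) * (g * b * g⁻¹) := by group
    rw [h]; exact (fitting G).mul_mem ha hb

end Paper

namespace Paper4Aux

open Paper MulAction

variable {A G : Type*} [Group A] [Group G] [MulDistribMulAction A G]

lemma orderOf_smul (a : A) (x : G) : orderOf (a • x) = orderOf x := by
  have h : a • x = MulDistribMulAction.toMulAut A G a x := rfl
  rw [h]
  exact orderOf_injective (MulDistribMulAction.toMulAut A G a).toMonoidHom
    (MulEquiv.injective _) x

lemma orderOf_eq_of_mem_orbit {x y : G} (h : x ∈ orbit A y) : orderOf x = orderOf y := by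
  obtain ⟨a, rfl⟩ := h
  exact orderOf_smul a y

lemma vert_ne {x y : G} (hx : x ≠ 1) (hy : y ≠ 1) (hord : orderOf x ≠ orderOf y) :
    vert A G x hx ≠ vert A G y hy := by
  intro h
  apply hord
  have h' : Quotient.mk (MulAction.orbitRel A G) x = Quotient.mk (MulAction.orbitRel A G) y :=
    Subtype.ext_iff.mp h
  exact orderOf_eq_of_mem_orbit (Quotient.exact h')

lemma mem_orbit_of_vert_eq {x y : G} (hx : x ≠ 1) (hy : y ≠ 1)
    (h : vert A G x hx = vert A G y hy) : y ∈ orbit A x := by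
  have h' : Quotient.mk (MulAction.orbitRel A G) x = Quotient.mk (MulAction.orbitRel A G) y :=
    Subtype.ext_iff.mp h
  have hrel : x ∈ orbit A y := Quotient.exact h'
  exact mem_orbit_symm.mp hrel

/-- In an F-graph with a singular vertex, every triangle contains the singular vertex. -/
lemma singular_mem_triangle [Finite G]
    (hF : IsFGraph (commGraph A G)) {zv : Vertex A G}
    (hs : 3 ≤ ((commGraph A G).neighborSet zv).ncard)
    {a b c : Vertex A G} (hab : (commGraph A G).Adj a b)
    (hbc : (commGraph A G).Adj b c) (hac : (commGraph A G).Adj a c) :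
    zv = a ∨ zv = b ∨ zv = c := by
  by_contra hcon
  push_neg at hcon
  obtain ⟨hza, hzb, hzc⟩ := hcon
  have : Finite (Quotient (MulAction.orbitRel A G)) := Quotient.finite _
  have : Finite (Vertex A G) := Subtype.finite
  -- each vertex of the triangle has all neighbors inside the triangle
  have key : ∀ u v w : Vertex A G, (commGraph A G).Adj u v → (commGraph A G).Adj u w →
      v ≠ w → zv ≠ u → ∀ d, (commGraph A G).Adj u d → d = v ∨ d = w := by
    intro u v w huv huw hvw hzu d hud
    by_contra hd
    push_neg at hd
    have hsub : ({v, w, d} : Set (Vertex A G)) ⊆ (commGraph A G).neighborSet u := by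
      intro x hx
      simp only [Set.mem_insert_iff, Set.mem_singleton_iff] at hx
      rcases hx with rfl | rfl | rfl <;> assumption
    have h3' : ({v, w, d} : Set (Vertex A G)).ncard = 3 :=
      Set.ncard_eq_three.mpr ⟨v, w, d, hvw, (Ne.symm hd.1), (Ne.symm hd.2), rfl⟩
    have h3 : 3 ≤ ((commGraph A G).neighborSet u).ncard := by
      calc 3 = ({v, w, d} : Set (Vertex A G)).ncard := h3'.symm
        _ ≤ _ := Set.ncard_le_ncard hsub (Set.toFinite _)
    exact hzu (hF.2 zv u hs h3)
  have closed : ∀ {x y : Vertex A G}, (commGraph A G).Walk x y →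
      (x = a ∨ x = b ∨ x = c) → (y = a ∨ y = b ∨ y = c) := by
    intro x y w
    induction w with
    | nil => exact id
    | @cons x' d y' hadj w ih =>
      intro hx
      apply ih
      rcases hx with rfl | rfl | rfl
      · rcases key x' b c hab hac hbc.ne hza d hadj with rfl | rfl
        · exact Or.inr (Or.inl rfl)
        · exact Or.inr (Or.inr rfl)
      · rcases key x' a c hab.symm hbc hac.ne hzb d hadj with rfl | rfl
        · exact Or.inl rfl
        · exact Or.inr (Or.inr rfl)
      · rcases key x' a b hac.symm hbc.symm hab.ne hzc d hadj with rfl | rfl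
        · exact Or.inl rfl
        · exact Or.inr (Or.inl rfl)
  obtain ⟨w⟩ := hF.1.preconnected a zv
  rcases closed w (Or.inl rfl) with rfl | rfl | rfl
  · exact hza rfl
  · exact hzb rfl
  · exact hzc rfl

/-- The key lemma: if the order of `h` is divisible by two distinct primes, then some power
`h ^ k` of `h`, with `k` not divisible by both primes, lies in the orbit of `z`. -/
lemma exists_pow_mem_orbit [Finite G]
    (hF : IsFGraph (commGraph A G)) {z : G} (hz1 : z ≠ 1)
    (hs : 3 ≤ ((commGraph A G).neighborSet (vert A G z hz1)).ncard)
    {q r : ℕ} (hq : q.Prime) (hr : r.Prime) (hqr : q ≠ r)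
    {h : G} (hdvd : q * r ∣ orderOf h) :
    ∃ k : ℕ, h ^ k ∈ orbit A z ∧ ¬ (q ∣ k ∧ r ∣ k) := by
  set n := orderOf h with hn
  have hn0 : n ≠ 0 := (orderOf_pos h).ne'
  have hqn : q ∣ n := (dvd_mul_right q r).trans hdvd
  have hrn : r ∣ n := (dvd_mul_left r q).trans hdvd
  have hh1 : h ≠ 1 := by
    intro he
    have hone : n = 1 := by rw [hn, he, orderOf_one]
    rw [hone] at hqn
    exact hq.one_lt.ne' (Nat.eq_one_of_dvd_one hqn)
  -- the q-part and r-part of h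
  set ku := ordCompl[q] n with hku
  set kv := ordCompl[r] n with hkv
  have hku_dvd : ku ∣ n := Nat.ordCompl_dvd n q
  have hkv_dvd : kv ∣ n := Nat.ordCompl_dvd n r
  have hku0 : ku ≠ 0 := (Nat.ordCompl_pos q hn0).ne'
  have hkv0 : kv ≠ 0 := (Nat.ordCompl_pos r hn0).ne'
  have hqku : ¬ q ∣ ku := Nat.not_dvd_ordCompl hq hn0
  have hrkv : ¬ r ∣ kv := Nat.not_dvd_ordCompl hr hn0
  have hordu : orderOf (h ^ ku) = q ^ n.factorization q := by
    rw [orderOf_pow_of_dvd hku0 hku_dvd, ← hn]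
    exact Nat.div_div_self (Nat.ordProj_dvd n q) hn0
  have hordv : orderOf (h ^ kv) = r ^ n.factorization r := by
    rw [orderOf_pow_of_dvd hkv0 hkv_dvd, ← hn]
    exact Nat.div_div_self (Nat.ordProj_dvd n r) hn0
  have haq : 0 < n.factorization q := hq.factorization_pos_of_dvd hn0 hqn
  have har : 0 < n.factorization r := hr.factorization_pos_of_dvd hn0 hrn
  have hq1 : 1 < q ^ n.factorization q := Nat.one_lt_pow haq.ne' hq.one_lt
  have hr1 : 1 < r ^ n.factorization r := Nat.one_lt_pow har.ne' hr.one_lt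
  have hu1 : h ^ ku ≠ 1 := by
    intro he
    rw [he, orderOf_one] at hordu
    exact hq1.ne' hordu.symm
  have hv1 : h ^ kv ≠ 1 := by
    intro he
    rw [he, orderOf_one] at hordv
    exact hr1.ne' hordv.symm
  -- coprimality facts used for distinguishing the orders
  have hqpow_r : ¬ r ∣ q ^ n.factorization q := fun hdv =>
    hqr ((Nat.prime_dvd_prime_iff_eq hr hq).mp (hr.dvd_of_dvd_pow hdv)).symm
  have hrpow_q : ¬ q ∣ r ^ n.factorization r := fun hdv =>
    hqr ((Nat.prime_dvd_prime_iff_eq hq hr).mp (hq.dvd_of_dvd_pow hdv))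
  -- the three vertices of the triangle
  have hne_uv : orderOf (h ^ ku) ≠ orderOf (h ^ kv) := by
    rw [hordu, hordv]
    intro he
    have hd : r ∣ r ^ n.factorization r := dvd_pow_self r har.ne'
    rw [← he] at hd
    exact hqpow_r hd
  have hne_uh : orderOf (h ^ ku) ≠ orderOf h := by
    rw [hordu, ← hn]
    intro he
    rw [← he] at hrn
    exact hqpow_r hrn
  have hne_vh : orderOf (h ^ kv) ≠ orderOf h := by
    rw [hordv, ← hn]
    intro he
    rw [← he] at hqn
    exact hrpow_q hqn
  have hadj_uv : (commGraph A G).Adj (vert A G (h ^ ku) hu1) (vert A G (h ^ kv) hv1) :=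
    ⟨vert_ne hu1 hv1 hne_uv, h ^ ku, h ^ kv, rfl, rfl, (Commute.refl h).pow_pow ku kv⟩
  have hadj_uh : (commGraph A G).Adj (vert A G (h ^ ku) hu1) (vert A G h hh1) :=
    ⟨vert_ne hu1 hh1 hne_uh, h ^ ku, h, rfl, rfl, (Commute.refl h).pow_left ku⟩
  have hadj_vh : (commGraph A G).Adj (vert A G (h ^ kv) hv1) (vert A G h hh1) :=
    ⟨vert_ne hv1 hh1 hne_vh, h ^ kv, h, rfl, rfl, (Commute.refl h).pow_left kv⟩
  rcases singular_mem_triangle hF hs hadj_uv hadj_vh hadj_uh with he | he | he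
  · exact ⟨ku, mem_orbit_of_vert_eq hz1 hu1 he, fun hk => hqku hk.1⟩
  · exact ⟨kv, mem_orbit_of_vert_eq hz1 hv1 he, fun hk => hrkv hk.2⟩
  · refine ⟨1, by simpa using mem_orbit_of_vert_eq hz1 hh1 he, fun hk => ?_⟩
    exact hq.one_lt.ne' (Nat.eq_one_of_dvd_one hk.1)

/-- A natural number that is neither `0`, `1`, nor a prime power has two distinct
prime divisors. -/
lemma exists_two_primes {n : ℕ} (hn0 : n ≠ 0) (hn1 : n ≠ 1) (hnp : ¬ IsPrimePow n) :
    ∃ q r : ℕ, q.Prime ∧ r.Prime ∧ q ≠ r ∧ q ∣ n ∧ r ∣ n := by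
  set q := n.minFac with hqdef
  have hq : q.Prime := Nat.minFac_prime hn1
  have hqn : q ∣ n := Nat.minFac_dvd n
  set m := ordCompl[q] n with hm
  have hmn : m ∣ n := Nat.ordCompl_dvd n q
  have hm0 : m ≠ 0 := (Nat.ordCompl_pos q hn0).ne'
  have hm1 : m ≠ 1 := by
    intro he
    apply hnp
    refine ⟨q, n.factorization q, hq.prime, hq.factorization_pos_of_dvd hn0 hqn, ?_⟩
    have := Nat.ordProj_mul_ordCompl_eq_self n q
    rw [← hm, he, mul_one] at this
    exact this
  refine ⟨q, m.minFac, hq, Nat.minFac_prime hm1, ?_, hqn, (Nat.minFac_dvd m).trans hmn⟩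
  intro he
  have hd := Nat.minFac_dvd m
  rw [← he] at hd
  exact Nat.not_dvd_ordCompl hq hn0 hd

end Paper4Aux

open Paper MulAction in
/-- For `A`-invariant subgroups `N ⊴ M` of `G` with `z^A ∩ M ⊆ N`, the quotient
`M/N` is an Eppo-group. In particular `G/N` is an Eppo-group whenever `N` is an `A`-invariant
normal subgroup meeting `z^A`, and any `A`-invariant subgroup `N` with `z^A ∩ N = ∅` is an
Eppo-group. -/
theorem statement4 (G A : Type*) [Group G] [Finite G] [Group A] [Finite A]
    [MulDistribMulAction A G]
    (hπ : 2 ≤ (Nat.card G).primeFactors.card)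
    (hF : IsFGraph (commGraph A G))
    (z : G) (hz1 : z ≠ 1)
    (hsing : 3 ≤ ((commGraph A G).neighborSet (vert A G z hz1)).ncard)
    (p : ℕ) (hp : p.Prime) (hpz : p ∣ orderOf z) :
    (∀ M N : Subgroup G, AInv A G M → AInv A G N → N ≤ M →
      ∀ [(N.subgroupOf M).Normal],
        (∀ x ∈ orbit A z, x ∈ M → x ∈ N) → IsEppo (M ⧸ N.subgroupOf M)) ∧
    (∀ N : Subgroup G, AInv A G N → ∀ [N.Normal],
        (orbit A z ∩ (N : Set G)).Nonempty → IsEppo (G ⧸ N)) ∧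
    (∀ N : Subgroup G, AInv A G N →
        orbit A z ∩ (N : Set G) = ∅ → IsEppo N) := by
  classical
  refine ⟨?_, ?_, ?_⟩
  · intro M N hM hN hle hnorm hsub
    intro x hx
    by_contra hnp
    have hx0 : orderOf x ≠ 0 := (orderOf_pos x).ne'
    have hx1 : orderOf x ≠ 1 := fun he => hx (orderOf_eq_one_iff.mp he)
    obtain ⟨q, r, hq, hr, hqr, hqd, hrd⟩ := Paper4Aux.exists_two_primes hx0 hx1 hnp
    obtain ⟨g, rfl⟩ := QuotientGroup.mk_surjective x
    have hdvd : q * r ∣ orderOf (g : G) := by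
      have h1 : orderOf (QuotientGroup.mk g : M ⧸ N.subgroupOf M) ∣ orderOf g :=
        orderOf_map_dvd (QuotientGroup.mk' (N.subgroupOf M)) g
      have h2 : orderOf g = orderOf (g : G) :=
        (orderOf_injective M.subtype M.subtype_injective g).symm
      rw [← h2]
      exact (Nat.Coprime.mul_dvd_of_dvd_of_dvd
        ((Nat.coprime_primes hq hr).mpr hqr) hqd hrd).trans h1
    obtain ⟨k, hk1, hk2⟩ := Paper4Aux.exists_pow_mem_orbit hF hz1 hsing hq hr hqr hdvd
    have hkN : (g : G) ^ k ∈ N := hsub _ hk1 (M.pow_mem g.2 k)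
    have hpow : (QuotientGroup.mk g : M ⧸ N.subgroupOf M) ^ k = 1 := by
      rw [← QuotientGroup.mk_pow]
      refine (QuotientGroup.eq_one_iff _).mpr ?_
      exact Subgroup.mem_subgroupOf.mpr hkN
    have hdk : orderOf (QuotientGroup.mk g : M ⧸ N.subgroupOf M) ∣ k :=
      orderOf_dvd_of_pow_eq_one hpow
    exact hk2 ⟨hqd.trans hdk, hrd.trans hdk⟩
  · intro N hN hnorm hne
    have hzN : ∀ w ∈ orbit A z, w ∈ N := by
      obtain ⟨w, hw1, hw2⟩ := hne
      obtain ⟨a, rfl⟩ := hw1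
      have hz : z ∈ N := by simpa using hN a⁻¹ _ hw2
      intro w' hw'
      obtain ⟨b, rfl⟩ := hw'
      exact hN b z hz
    intro x hx
    by_contra hnp
    have hx0 : orderOf x ≠ 0 := (orderOf_pos x).ne'
    have hx1 : orderOf x ≠ 1 := fun he => hx (orderOf_eq_one_iff.mp he)
    obtain ⟨q, r, hq, hr, hqr, hqd, hrd⟩ := Paper4Aux.exists_two_primes hx0 hx1 hnp
    obtain ⟨g, rfl⟩ := QuotientGroup.mk_surjective x
    have hdvd : q * r ∣ orderOf g := by
      have h1 : orderOf (QuotientGroup.mk g : G ⧸ N) ∣ orderOf g :=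
        orderOf_map_dvd (QuotientGroup.mk' N) g
      exact (Nat.Coprime.mul_dvd_of_dvd_of_dvd
        ((Nat.coprime_primes hq hr).mpr hqr) hqd hrd).trans h1
    obtain ⟨k, hk1, hk2⟩ := Paper4Aux.exists_pow_mem_orbit hF hz1 hsing hq hr hqr hdvd
    have hkN : g ^ k ∈ N := hzN _ hk1
    have hpow : (QuotientGroup.mk g : G ⧸ N) ^ k = 1 := by
      rw [← QuotientGroup.mk_pow]
      exact (QuotientGroup.eq_one_iff _).mpr hkN
    have hdk : orderOf (QuotientGroup.mk g : G ⧸ N) ∣ k := orderOf_dvd_of_pow_eq_one hpow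
    exact hk2 ⟨hqd.trans hdk, hrd.trans hdk⟩
  · intro N hN hempty
    intro x hx
    by_contra hnp
    have hx0 : orderOf x ≠ 0 := (orderOf_pos x).ne'
    have hx1 : orderOf x ≠ 1 := fun he => hx (orderOf_eq_one_iff.mp he)
    obtain ⟨q, r, hq, hr, hqr, hqd, hrd⟩ := Paper4Aux.exists_two_primes hx0 hx1 hnp
    have hcoe : orderOf (x : G) = orderOf x := orderOf_injective N.subtype N.subtype_injective x
    have hdvd : q * r ∣ orderOf (x : G) := by
      rw [hcoe]
      exact Nat.Coprime.mul_dvd_of_dvd_of_dvd ((Nat.coprime_primes hq hr).mpr hqr) hqd hrd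
    obtain ⟨k, hk1, hk2⟩ := Paper4Aux.exists_pow_mem_orbit hF hz1 hsing hq hr hqr hdvd
    have hkN : (x : G) ^ k ∈ N := N.pow_mem x.2 k
    have : (x : G) ^ k ∈ orbit A z ∩ (N : Set G) := ⟨hk1, hkN⟩
    rw [hempty] at this
    exact this
end

section
/- Let G = SL(2,7), the special linear group of degree 2 over the field with 7 elements. Then there exists no subgroup A of Aut(G) such that the commuting graph Γ(G,A) of A-orbits is an F-graph. -/
open MulAction

namespace SL7Proof

abbrev SL7 := Matrix.SpecialLinearGroup (Fin 2) (ZMod 7)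

instance : DecidableEq SL7 :=
  show DecidableEq {A : Matrix (Fin 2) (Fin 2) (ZMod 7) // A.det = 1} from inferInstance

def zz : SL7 := ⟨!![6, 0; 0, 6], by decide⟩
def uu : SL7 := ⟨!![0, 6; 1, 3], by decide⟩
def tt : SL7 := ⟨!![0, 6; 1, 6], by decide⟩

/-- A counting invariant distinguishing the two `Aut`-orbits of order-8 elements. -/
def cnt (v : SL7) : ℕ :=
  (Finset.univ.filter fun x : SL7 =>
    x ^ 3 = 1 ∧ x ≠ 1 ∧ (v * x) ^ 3 = 1 ∧ (v * x⁻¹) ^ 8 = 1 ∧ (v * x⁻¹) ^ 4 ≠ 1).card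

lemma pow_iff (e : SL7 ≃* SL7) (y : SL7) (n : ℕ) : (e y) ^ n = 1 ↔ y ^ n = 1 := by
  rw [← map_pow]
  exact ⟨fun h => e.injective (by rw [h, map_one]), fun h => by rw [h, map_one]⟩

lemma cnt_le (e : SL7 ≃* SL7) (v : SL7) : cnt v ≤ cnt (e v) := by
  unfold cnt
  apply Finset.card_le_card_of_injOn (fun x => e x)
  · intro x hx
    simp only [Finset.coe_filter, Set.mem_setOf_eq, Finset.mem_filter, Finset.mem_univ, true_and] at hx ⊢
    obtain ⟨h1, h2, h3, h4, h5⟩ := hx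
    have hm1 : e v * e x = e (v * x) := (map_mul e v x).symm
    have hm2 : e v * (e x)⁻¹ = e (v * x⁻¹) := by rw [← map_inv, ← map_mul]
    refine ⟨(pow_iff e x 3).mpr h1,
      fun h => h2 (e.injective (by rw [h, map_one])), ?_, ?_, ?_⟩
    · rw [hm1]; exact (pow_iff e _ 3).mpr h3
    · rw [hm2]; exact (pow_iff e _ 8).mpr h4
    · rw [hm2]; exact fun h => h5 ((pow_iff e _ 4).mp h)
  · exact fun x _ y _ h => e.injective h

lemma cnt_aut (e : SL7 ≃* SL7) (v : SL7) : cnt (e v) = cnt v :=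
  le_antisymm (by simpa using cnt_le e.symm (e v)) (cnt_le e v)

set_option maxHeartbeats 4000000 in
set_option maxRecDepth 10000 in
lemma cnt_ne : cnt uu ≠ cnt (uu ^ 3) := by decide

end SL7Proof

open Paper MulAction in
/-- For `G = SL(2,7)` there is no subgroup `A` of `Aut(G)` such that the
commuting graph `Γ(G,A)` of `A`-orbits is an `F`-graph. -/
theorem statement13 :
    ¬ ∃ A : Subgroup (MulAut (Matrix.SpecialLinearGroup (Fin 2) (ZMod 7))),
      letI := MulDistribMulAction.compHom
        (Matrix.SpecialLinearGroup (Fin 2) (ZMod 7)) A.subtype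
      IsFGraph (commGraph A (Matrix.SpecialLinearGroup (Fin 2) (ZMod 7))) := by
  rintro ⟨A, hA⟩
  letI inst := MulDistribMulAction.compHom
    (Matrix.SpecialLinearGroup (Fin 2) (ZMod 7)) A.subtype
  set SL7 := Matrix.SpecialLinearGroup (Fin 2) (ZMod 7) with hSL
  -- From equality of vertices, extract an automorphism mapping one element to the other.
  have key : ∀ (x y : SL7) (hx : x ≠ 1) (hy : y ≠ 1),
      vert ↥A SL7 x hx = vert ↥A SL7 y hy → ∃ e : SL7 ≃* SL7, e y = x := by
    intro x y hx hy he
    obtain ⟨a, ha⟩ := Quotient.exact (Subtype.ext_iff.mp he)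
    exact ⟨(a : MulAut SL7), ha⟩
  haveI : Finite (Vertex ↥A SL7) := by unfold Vertex; infer_instance
  -- basic elements
  have hz1 : SL7Proof.zz ≠ 1 := by decide
  have hu1 : SL7Proof.uu ≠ 1 := by decide
  have hu21 : SL7Proof.uu ^ 2 ≠ 1 := by decide
  have hu31 : SL7Proof.uu ^ 3 ≠ 1 := by decide
  have ht1 : SL7Proof.tt ≠ 1 := by decide
  set vz := vert ↥A SL7 SL7Proof.zz hz1 with hvz
  set vu := vert ↥A SL7 SL7Proof.uu hu1 with hvu
  set v2 := vert ↥A SL7 (SL7Proof.uu ^ 2) hu21 with hv2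
  set v3 := vert ↥A SL7 (SL7Proof.uu ^ 3) hu31 with hv3
  set vt := vert ↥A SL7 SL7Proof.tt ht1 with hvt
  -- distinctness of vertices
  have dzu : vz ≠ vu := by
    intro h; obtain ⟨e, he⟩ := key _ _ _ _ h
    have : SL7Proof.uu ^ 2 = 1 := (SL7Proof.pow_iff e _ 2).mp (by rw [he]; decide)
    exact hu21 this
  have dz2 : vz ≠ v2 := by
    intro h; obtain ⟨e, he⟩ := key _ _ _ _ h
    have : (SL7Proof.uu ^ 2) ^ 2 = 1 := (SL7Proof.pow_iff e _ 2).mp (by rw [he]; decide)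
    exact (by decide : (SL7Proof.uu ^ 2) ^ 2 ≠ 1) this
  have dz3 : vz ≠ v3 := by
    intro h; obtain ⟨e, he⟩ := key _ _ _ _ h
    have : (SL7Proof.uu ^ 3) ^ 2 = 1 := (SL7Proof.pow_iff e _ 2).mp (by rw [he]; decide)
    exact (by decide : (SL7Proof.uu ^ 3) ^ 2 ≠ 1) this
  have dzt : vz ≠ vt := by
    intro h; obtain ⟨e, he⟩ := key _ _ _ _ h
    have : SL7Proof.tt ^ 2 = 1 := (SL7Proof.pow_iff e _ 2).mp (by rw [he]; decide)
    exact (by decide : SL7Proof.tt ^ 2 ≠ 1) this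
  have du2 : vu ≠ v2 := by
    intro h; obtain ⟨e, he⟩ := key _ _ _ _ h
    have : (SL7Proof.uu ^ 2) ^ 4 = 1 := by decide
    have h4 : SL7Proof.uu ^ 4 = 1 := by
      have := (SL7Proof.pow_iff e (SL7Proof.uu ^ 2) 4).mpr this
      rw [he] at this; exact this
    exact (by decide : SL7Proof.uu ^ 4 ≠ 1) h4
  have dut : vu ≠ vt := by
    intro h; obtain ⟨e, he⟩ := key _ _ _ _ h
    have h3 : SL7Proof.uu ^ 3 = 1 := by
      have := (SL7Proof.pow_iff e SL7Proof.tt 3).mpr (by decide)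
      rw [he] at this; exact this
    exact hu31 h3
  have d2t : v2 ≠ vt := by
    intro h; obtain ⟨e, he⟩ := key _ _ _ _ h
    have h3 : (SL7Proof.uu ^ 2) ^ 3 = 1 := by
      have := (SL7Proof.pow_iff e SL7Proof.tt 3).mpr (by decide)
      rw [he] at this; exact this
    exact (by decide : (SL7Proof.uu ^ 2) ^ 3 ≠ 1) h3
  have du3 : vu ≠ v3 := by
    intro h; obtain ⟨e, he⟩ := key _ _ _ _ h
    have hc := SL7Proof.cnt_aut e (SL7Proof.uu ^ 3)
    rw [he] at hc
    exact SL7Proof.cnt_ne hc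
  have d23 : v2 ≠ v3 := by
    intro h; obtain ⟨e, he⟩ := key _ _ _ _ h
    have : (SL7Proof.uu ^ 3) ^ 4 = 1 := by
      have := (SL7Proof.pow_iff e (SL7Proof.uu ^ 3) 4).mp (by rw [he]; decide)
      exact this
    exact (by decide : (SL7Proof.uu ^ 3) ^ 4 ≠ 1) this
  -- adjacency facts
  have adj : ∀ (x y : SL7) (hx : x ≠ 1) (hy : y ≠ 1),
      vert ↥A SL7 x hx ≠ vert ↥A SL7 y hy → x * y = y * x →
      (commGraph ↥A SL7).Adj (vert ↥A SL7 x hx) (vert ↥A SL7 y hy) := by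
    intro x y hx hy hne hc
    unfold commGraph
    exact ⟨hne, x, y, rfl, rfl, hc⟩
  -- degree ≥ 3 at vz and vu
  have card3 : ∀ (S : Set (Vertex ↥A SL7)) (a b c : Vertex ↥A SL7),
      a ∈ S → b ∈ S → c ∈ S → a ≠ b → a ≠ c → b ≠ c → 3 ≤ S.ncard := by
    intro S a b c ha hb hc hab hac hbc
    have hsub : ({a, b, c} : Set (Vertex ↥A SL7)) ⊆ S := by
      intro x hx
      rcases hx with rfl | rfl | rfl <;> assumption
    have hcard : ({a, b, c} : Set (Vertex ↥A SL7)).ncard = 3 := by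
      rw [Set.ncard_insert_of_notMem (by simp [hab, hac]) (Set.toFinite _),
        Set.ncard_pair hbc]
    exact hcard ▸ Set.ncard_le_ncard hsub (Set.toFinite S)
  have hdegz : 3 ≤ ((commGraph ↥A SL7).neighborSet vz).ncard := by
    refine card3 _ vu v2 vt ?_ ?_ ?_ du2 dut d2t
    · exact adj _ _ _ _ dzu (by decide)
    · exact adj _ _ _ _ dz2 (by decide)
    · exact adj _ _ _ _ dzt (by decide)
  have hdegu : 3 ≤ ((commGraph ↥A SL7).neighborSet vu).ncard := by
    refine card3 _ vz v2 v3 ?_ ?_ ?_ dz2 dz3 d23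
    · exact adj _ _ _ _ dzu.symm (by decide)
    · exact adj _ _ _ _ du2 (by decide)
    · exact adj _ _ _ _ du3 (by decide)
  exact dzu (hA.2 vz vu hdegz hdegu)
end
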